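/- arXiv:2305.02692 — 5 statements merged into one kernel-verified Lean document; each statement's English description precedes it below -/
import Mathlib

section
/- For every k ∈ ℤ∖{0} and a, b, c, d ∈ ℂ with a ≠ 0, the linear map φ of the centerless twisted Heisenberg–Virasoro algebra 𝒲 defined on basis elements by φ(L_n) = (1/k)aⁿL_{kn} + aⁿ(cn+d)I_{kn} and φ(I_n) = aⁿ b I_{kn} for all n ∈ ℤ is a Lie algebra endomorphism of 𝒲, i.e. φ([x,y]) = [φ(x), φ(y)] for all x, y ∈ 𝒲. -/
/-- Basis of the centerless twisted Heisenberg–Virasoro algebra. -/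
inductive WBasis
  | L : ℤ → WBasis
  | I : ℤ → WBasis

/-- The underlying ℂ-vector space with basis `{L n, I n : n ∈ ℤ}`. -/
abbrev W : Type := WBasis →₀ ℂ

noncomputable def Ln (n : ℤ) : W := Finsupp.single (WBasis.L n) 1
noncomputable def In (n : ℤ) : W := Finsupp.single (WBasis.I n) 1

/-- Bracket on basis elements:
`[L n, L m] = (n-m) L (n+m)`, `[L n, I m] = -m I (n+m)`, `[I n, I m] = 0`. -/
noncomputable def brkt : WBasis → WBasis → W
  | WBasis.L n, WBasis.L m => ((n : ℂ) - m) • Ln (n + m)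
  | WBasis.L n, WBasis.I m => (-(m : ℂ)) • In (n + m)
  | WBasis.I n, WBasis.L m => (n : ℂ) • In (m + n)
  | WBasis.I _, WBasis.I _ => 0

/-- The bilinear extension of `brkt` to all of `W`. -/
noncomputable def br : W →ₗ[ℂ] W →ₗ[ℂ] W :=
  Finsupp.lift (W →ₗ[ℂ] W) ℂ WBasis fun i =>
    Finsupp.lift W ℂ WBasis fun j => brkt i j

/-- The linear map determined on basis elements by
`φ(L n) = (1/k) aⁿ L (kn) + aⁿ(cn+d) I (kn)` and `φ(I n) = aⁿ b I (kn)`. -/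
noncomputable def φmap (k : ℤ) (a b c d : ℂ) : W →ₗ[ℂ] W :=
  Finsupp.lift W ℂ WBasis fun i =>
    match i with
    | WBasis.L n => (1 / (k : ℂ) * a ^ n) • Ln (k * n) + (a ^ n * (c * n + d)) • In (k * n)
    | WBasis.I n => (a ^ n * b) • In (k * n)

/-!
Both sides of the identity are bilinear in `(x, y)`, so it suffices to check it on pairs of basis
vectors. There it is a direct computation: the factor `1/k` in `φ(L n)` is absorbed by the factor
`k` that `[L (k n), -]` produces, and `aⁿ aᵐ = aⁿ⁺ᵐ` for integer exponents because `a ≠ 0`.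
-/

theorem Finsupp.map_bilinear_of_single {R ι M : Type*} [CommSemiring R] [AddCommMonoid M]
    [Module R M] (B : (ι →₀ R) →ₗ[R] (ι →₀ R) →ₗ[R] (ι →₀ R)) (B' : M →ₗ[R] M →ₗ[R] M)
    (φ : (ι →₀ R) →ₗ[R] M)
    (h : ∀ i j, φ (B (single i 1) (single j 1)) = B' (φ (single i 1)) (φ (single j 1)))
    (x y : ι →₀ R) : φ (B x y) = B' (φ x) (φ y) := by
  have hB : B.compr₂ φ = B'.compl₁₂ φ φ := by
    ext i j
    exact h i j
  exact LinearMap.congr_fun₂ hB x y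

section BasisComputations

variable (k : ℤ) (a b c d : ℂ)

lemma φmap_Ln (n : ℤ) :
    φmap k a b c d (Ln n) =
      (1 / (k : ℂ) * a ^ n) • Ln (k * n) + (a ^ n * (c * n + d)) • In (k * n) := by
  simp [φmap, Ln]

lemma φmap_In (n : ℤ) : φmap k a b c d (In n) = (a ^ n * b) • In (k * n) := by
  simp [φmap, In]

lemma br_Ln_Ln (n m : ℤ) : br (Ln n) (Ln m) = ((n : ℂ) - m) • Ln (n + m) := by
  simp [br, Ln, brkt]

lemma br_Ln_In (n m : ℤ) : br (Ln n) (In m) = (-(m : ℂ)) • In (n + m) := by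
  simp [br, Ln, In, brkt]

lemma br_In_Ln (n m : ℤ) : br (In n) (Ln m) = (n : ℂ) • In (n + m) := by
  simp [br, Ln, In, brkt, add_comm]

lemma br_In_In (n m : ℤ) : br (In n) (In m) = 0 := by
  simp [br, In, brkt]

lemma φmap_br_Ln_Ln (hk : k ≠ 0) (ha : a ≠ 0) (n m : ℤ) :
    φmap k a b c d (br (Ln n) (Ln m)) = br (φmap k a b c d (Ln n)) (φmap k a b c d (Ln m)) := by
  simp only [φmap_Ln, br_Ln_Ln, br_Ln_In, br_In_Ln, br_In_In, map_add, map_smul,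
    LinearMap.add_apply, LinearMap.smul_apply, smul_add, smul_zero, add_zero, smul_smul,
    ← mul_add k, zpow_add₀ ha]
  match_scalars
  · field_simp
  · field_simp
    ring

lemma φmap_br_Ln_In (hk : k ≠ 0) (ha : a ≠ 0) (n m : ℤ) :
    φmap k a b c d (br (Ln n) (In m)) = br (φmap k a b c d (Ln n)) (φmap k a b c d (In m)) := by
  simp only [φmap_Ln, φmap_In, br_Ln_In, br_In_In, map_add, map_smul, LinearMap.add_apply,
    LinearMap.smul_apply, smul_zero, add_zero, smul_smul, ← mul_add k, zpow_add₀ ha]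
  match_scalars
  field_simp

lemma φmap_br_In_Ln (hk : k ≠ 0) (ha : a ≠ 0) (n m : ℤ) :
    φmap k a b c d (br (In n) (Ln m)) = br (φmap k a b c d (In n)) (φmap k a b c d (Ln m)) := by
  simp only [φmap_Ln, φmap_In, br_In_Ln, br_In_In, map_add, map_smul, LinearMap.smul_apply,
    smul_zero, add_zero, smul_smul, ← mul_add k, zpow_add₀ ha]
  match_scalars
  field_simp

lemma φmap_br_In_In (n m : ℤ) :
    φmap k a b c d (br (In n) (In m)) = br (φmap k a b c d (In n)) (φmap k a b c d (In m)) := by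
  simp [φmap_In, br_In_In]

end BasisComputations

/-- For every `k ∈ ℤ∖{0}` and `a,b,c,d ∈ ℂ` with `a ≠ 0`, the map `φmap k a b c d`
is a Lie algebra endomorphism of the centerless twisted Heisenberg–Virasoro algebra. -/
theorem φmap_is_endomorphism (k : ℤ) (hk : k ≠ 0) (a b c d : ℂ) (ha : a ≠ 0) :
    ∀ x y : W, φmap k a b c d (br x y) = br (φmap k a b c d x) (φmap k a b c d y) := by
  refine Finsupp.map_bilinear_of_single br br _ ?_
  rintro (n | n) (m | m)
  exacts [φmap_br_Ln_Ln k a b c d hk ha n m, φmap_br_Ln_In k a b c d hk ha n m,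
    φmap_br_In_Ln k a b c d hk ha n m, φmap_br_In_In k a b c d n m]
end

section
/- Let L be a ℂ-vector space, let b : L × L → L be a bilinear map with b(x,y) = −b(y,x) for all x, y, and let φ : L → L be a linear isomorphism such that b(φ(x), b(y,z)) + b(φ(y), b(z,x)) + b(φ(z), b(x,y)) = 0 and φ(b(x,y)) = b(φ(x), φ(y)) for all x, y, z (i.e. (L, b, φ) is a regular multiplicative Hom-Lie algebra). Then the bracket [x,y] := φ⁻¹(b(x,y)) satisfies the Jacobi identity, so (L, [·,·]) is a Lie algebra; moreover φ is a Lie algebra endomorphism of (L, [·,·]) and φ([x,y]) = b(x,y) for all x, y, so (L, [·,·]) is the induced Lie algebra of (L, b, φ). -/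
/-! The induced bracket `[x,y] = φ⁻¹ (b x y)` is the Hom-Lie bracket transported along `φ⁻¹`:
since `φ` is multiplicative, so is `φ⁻¹`, and applying `φ⁻¹` to the Hom-Jacobi identity at
`φ⁻¹ x, φ⁻¹ y, φ⁻¹ z` gives the ordinary Jacobi identity for `[·,·]`. -/

namespace LinearEquiv

variable {R M : Type*} [CommSemiring R] [AddCommMonoid M] [Module R M]
  {b : M →ₗ[R] M →ₗ[R] M} {φ : M ≃ₗ[R] M}

theorem symm_map_bracket (hmul : ∀ x y, φ (b x y) = b (φ x) (φ y)) (x y : M) :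
    φ.symm (b x y) = b (φ.symm x) (φ.symm y) := by
  rw [φ.symm_apply_eq, hmul, φ.apply_symm_apply, φ.apply_symm_apply]

theorem jacobi_symm_bracket (hmul : ∀ x y, φ (b x y) = b (φ x) (φ y))
    (hjac : ∀ x y z, b (φ x) (b y z) + b (φ y) (b z x) + b (φ z) (b x y) = 0) (x y z : M) :
    φ.symm (b x (φ.symm (b y z))) + φ.symm (b y (φ.symm (b z x))) +
      φ.symm (b z (φ.symm (b x y))) = 0 := by
  have h := hjac (φ.symm x) (φ.symm y) (φ.symm z)
  simp only [apply_symm_apply, ← symm_map_bracket hmul] at h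
  rw [← map_add, ← map_add, h, map_zero]

end LinearEquiv

theorem regular_hom_lie_induces_lie_general (L : Type*) [AddCommGroup L] [Module ℂ L]
    (b : L →ₗ[ℂ] L →ₗ[ℂ] L) (φ : L ≃ₗ[ℂ] L)
    (hjac : ∀ x y z : L, b (φ x) (b y z) + b (φ y) (b z x) + b (φ z) (b x y) = 0)
    (hmul : ∀ x y : L, φ (b x y) = b (φ x) (φ y)) :
    (∀ x y z : L,
      φ.symm (b x (φ.symm (b y z))) + φ.symm (b y (φ.symm (b z x))) +
        φ.symm (b z (φ.symm (b x y))) = 0) ∧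
    (∀ x y : L, φ (φ.symm (b x y)) = φ.symm (b (φ x) (φ y))) ∧
    (∀ x y : L, φ (φ.symm (b x y)) = b x y) := by
  refine ⟨φ.jacobi_symm_bracket hmul hjac, fun x y => ?_, fun x y => φ.apply_symm_apply _⟩
  rw [φ.apply_symm_apply, φ.symm_map_bracket hmul, φ.symm_apply_apply, φ.symm_apply_apply]

/-- A regular multiplicative Hom-Lie algebra `(L, b, φ)` induces a Lie algebra
structure `[x,y] := φ⁻¹(b x y)`: the induced bracket satisfies the Jacobi
identity, `φ` is an endomorphism of the induced Lie algebra, and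
`φ [x,y] = b x y`. -/
theorem regular_hom_lie_induces_lie (L : Type*) [AddCommGroup L] [Module ℂ L]
    (b : L →ₗ[ℂ] L →ₗ[ℂ] L) (φ : L ≃ₗ[ℂ] L)
    (hskew : ∀ x y : L, b x y = -b y x)
    (hjac : ∀ x y z : L, b (φ x) (b y z) + b (φ y) (b z x) + b (φ z) (b x y) = 0)
    (hmul : ∀ x y : L, φ (b x y) = b (φ x) (φ y)) :
    (∀ x y z : L,
      φ.symm (b x (φ.symm (b y z))) + φ.symm (b y (φ.symm (b z x))) +
        φ.symm (b z (φ.symm (b x y))) = 0) ∧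
    (∀ x y : L, φ (φ.symm (b x y)) = φ.symm (b (φ x) (φ y))) ∧
    (∀ x y : L, φ (φ.symm (b x y)) = b x y) :=
  regular_hom_lie_induces_lie_general L b φ hjac hmul
end

section
/- Let g be a Lie algebra over ℂ, φ : g → g a Lie algebra homomorphism, V a ℂ-vector space, ϕ : V → V an invertible linear map, and ρ_φ : g → End(V) a linear map satisfying, for all x, y ∈ g: (R1) ρ_φ(φ([x,y])) ∘ ϕ = ρ_φ(φ(x)) ∘ ρ_φ(y) − ρ_φ(φ(y)) ∘ ρ_φ(x), and (R2) ρ_φ(φ(x)) ∘ ϕ = ϕ ∘ ρ_φ(x). Then ρ := ϕ⁻¹ ∘ ρ_φ (i.e. ρ(x) = ϕ⁻¹ ∘ ρ_φ(x)) satisfies ρ([x,y]) = ρ(x) ∘ ρ(y) − ρ(y) ∘ ρ(x) for all x, y ∈ g, i.e. ρ is a representation of the Lie algebra g on V. -/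
/-! Condition (R2) says that `ϕ` intertwines `ρ_φ ∘ φ` with `ρ_φ`, i.e. `ρ_φ (φ x) = ϕ ρ_φ(x) ϕ⁻¹`.
Substituting this into (R1) and cancelling `ϕ` gives
`ρ_φ [x, y] = ρ_φ(x) ϕ⁻¹ ρ_φ(y) - ρ_φ(y) ϕ⁻¹ ρ_φ(x)`, and multiplying by `ϕ⁻¹` on the left is the
claim. The computation takes place in the ring `End(V)`, with `ϕ` a unit. -/

theorem Units.inv_mul_eq_sub_of_twisted_commutator {A : Type*} [Ring A] (u : Aˣ)
    {a b c a' b' c' : A} (ha : a' * u = u * a) (hb : b' * u = u * b) (hc : c' * u = u * c)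
    (h : c' * u = a' * b - b' * a) :
    ↑u⁻¹ * c = ↑u⁻¹ * a * (↑u⁻¹ * b) - ↑u⁻¹ * b * (↑u⁻¹ * a) := by
  have ha' : ↑u⁻¹ * a' = a * ↑u⁻¹ := (SemiconjBy.units_inv_symm_left ha.symm).eq
  have hb' : ↑u⁻¹ * b' = b * ↑u⁻¹ := (SemiconjBy.units_inv_symm_left hb.symm).eq
  have hc' : c = a * ↑u⁻¹ * b - b * ↑u⁻¹ * a := by
    rw [← u.inv_mul_cancel_left c, ← hc, h, mul_sub, ← mul_assoc, ← mul_assoc, ha', hb']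
  rw [hc']
  noncomm_ring

/-- If `(V, ρ_φ, ϕ)` is a representation of the multiplicative Hom-Lie algebra
obtained from a Lie algebra `g` and an endomorphism `φ` by the Yau twist, and
`ϕ` is invertible, then `ρ := ϕ⁻¹ ∘ ρ_φ` is a representation of the Lie
algebra `g` on `V`. -/
theorem hom_rep_gives_lie_rep (g V : Type*) [LieRing g] [LieAlgebra ℂ g]
    [AddCommGroup V] [Module ℂ V] (φ : g →ₗ⁅ℂ⁆ g)
    (ϕ : V ≃ₗ[ℂ] V) (ρφ : g →ₗ[ℂ] V →ₗ[ℂ] V)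
    (hR1 : ∀ x y : g, ρφ (φ ⁅x, y⁆) ∘ₗ (ϕ : V →ₗ[ℂ] V)
        = ρφ (φ x) ∘ₗ ρφ y - ρφ (φ y) ∘ₗ ρφ x)
    (hR2 : ∀ x : g, ρφ (φ x) ∘ₗ (ϕ : V →ₗ[ℂ] V) = (ϕ : V →ₗ[ℂ] V) ∘ₗ ρφ x) :
    ∀ x y : g,
      (ϕ.symm : V →ₗ[ℂ] V) ∘ₗ ρφ ⁅x, y⁆
        = ((ϕ.symm : V →ₗ[ℂ] V) ∘ₗ ρφ x) ∘ₗ ((ϕ.symm : V →ₗ[ℂ] V) ∘ₗ ρφ y)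
          - ((ϕ.symm : V →ₗ[ℂ] V) ∘ₗ ρφ y) ∘ₗ ((ϕ.symm : V →ₗ[ℂ] V) ∘ₗ ρφ x) := fun x y =>
  (LinearMap.GeneralLinearGroup.ofLinearEquiv ϕ).inv_mul_eq_sub_of_twisted_commutator
    (hR2 x) (hR2 y) (hR2 ⁅x, y⁆) (hR1 x y)
end

section
/- Let g be a Lie algebra over ℂ, φ : g → g a Lie algebra homomorphism, and ρ : g → End(V) a representation of g on a ℂ-vector space V (so ρ([x,y]) = ρ(x)∘ρ(y) − ρ(y)∘ρ(x)). Suppose ϕ : V → V is a linear map such that ρ(φ(x)) ∘ ϕ = ϕ ∘ ρ(x) for all x ∈ g. Then ρ_φ := ϕ ∘ ρ satisfies, for all x, y ∈ g: (R1) ρ_φ(φ([x,y])) ∘ ϕ = ρ_φ(φ(x)) ∘ ρ_φ(y) − ρ_φ(φ(y)) ∘ ρ_φ(x), and (R2) ρ_φ(φ(x)) ∘ ϕ = ϕ ∘ ρ_φ(x); that is, (V, ρ_φ, ϕ) is a representation of the multiplicative Hom-Lie algebra (g, φ∘[·,·], φ). -/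
namespace LinearMap

variable {R M N : Type*} [CommSemiring R] [AddCommMonoid M] [AddCommMonoid N]
  [Module R M] [Module R N]

theorem comp_comp_eq_of_comp_eq {ϕ a b : M →ₗ[R] M} (h : a ∘ₗ ϕ = ϕ ∘ₗ b) :
    (ϕ ∘ₗ a) ∘ₗ ϕ = ϕ ∘ₗ ϕ ∘ₗ b := by
  rw [comp_assoc, h]

theorem comp_comp_comp_eq_of_comp_eq {ϕ a b : M →ₗ[R] M} (h : a ∘ₗ ϕ = ϕ ∘ₗ b)
    (c : N →ₗ[R] M) : (ϕ ∘ₗ a) ∘ₗ (ϕ ∘ₗ c) = ϕ ∘ₗ ϕ ∘ₗ b ∘ₗ c := by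
  rw [← comp_assoc, comp_comp_eq_of_comp_eq h]
  rfl

end LinearMap

open LinearMap in
/-- If `ρ` is a representation of a Lie algebra `g` on `V`, `φ : g → g` is a Lie
algebra endomorphism, and `ϕ : V → V` is a linear map with
`ρ(φ x) ∘ ϕ = ϕ ∘ ρ x`, then `ρ_φ := ϕ ∘ ρ` satisfies the conditions (R1) and
(R2), i.e. `(V, ρ_φ, ϕ)` is a representation of the multiplicative Hom-Lie
algebra `(g, φ∘[·,·], φ)`. -/
theorem lie_rep_gives_hom_rep (g V : Type*) [LieRing g] [LieAlgebra ℂ g]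
    [AddCommGroup V] [Module ℂ V] (φ : g →ₗ⁅ℂ⁆ g)
    (ρ : g →ₗ[ℂ] V →ₗ[ℂ] V)
    (hrep : ∀ x y : g, ρ ⁅x, y⁆ = ρ x ∘ₗ ρ y - ρ y ∘ₗ ρ x)
    (ϕ : V →ₗ[ℂ] V)
    (hcomm : ∀ x : g, ρ (φ x) ∘ₗ ϕ = ϕ ∘ₗ ρ x) :
    (∀ x y : g, (ϕ ∘ₗ ρ (φ ⁅x, y⁆)) ∘ₗ ϕ
        = (ϕ ∘ₗ ρ (φ x)) ∘ₗ (ϕ ∘ₗ ρ y) - (ϕ ∘ₗ ρ (φ y)) ∘ₗ (ϕ ∘ₗ ρ x)) ∧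
    (∀ x : g, (ϕ ∘ₗ ρ (φ x)) ∘ₗ ϕ = ϕ ∘ₗ (ϕ ∘ₗ ρ x)) := by
  refine ⟨fun x y => ?_, fun x => comp_comp_eq_of_comp_eq (hcomm x)⟩
  calc (ϕ ∘ₗ ρ (φ ⁅x, y⁆)) ∘ₗ ϕ
      = ϕ ∘ₗ ϕ ∘ₗ (ρ x ∘ₗ ρ y - ρ y ∘ₗ ρ x) := by
        rw [comp_comp_eq_of_comp_eq (hcomm _), hrep]
    _ = (ϕ ∘ₗ ρ (φ x)) ∘ₗ (ϕ ∘ₗ ρ y) - (ϕ ∘ₗ ρ (φ y)) ∘ₗ (ϕ ∘ₗ ρ x) := by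
        rw [comp_comp_comp_eq_of_comp_eq (hcomm x), comp_comp_comp_eq_of_comp_eq (hcomm y),
          comp_sub, comp_sub]
end

section
/- Let α, β ∈ ℂ and F ∈ ℂ∖{0}, and on V define linear operators 𝕃_n, 𝕀_n by 𝕃_n(v_t) = (α+t+βn)v_{n+t} and 𝕀_n(v_t) = F·v_{n+t}. Let k ∈ ℤ∖{0}, a ∈ ℂ∖{0}, b, c, d ∈ ℂ, and suppose φ : V → V is a nonzero linear map satisfying, for all n ∈ ℤ: φ ∘ 𝕃_n = ((1/k)aⁿ·𝕃_{kn} + aⁿ(cn+d)·𝕀_{kn}) ∘ φ and φ ∘ 𝕀_n = aⁿb·𝕀_{kn} ∘ φ. Then b = 1, c = 0, q := kα − α − kFd is an integer, and there exists m ∈ ℂ∖{0} such that φ(v_t) = aᵗ·m·v_{kt+q} for all t ∈ ℤ. -/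
/-- The ℂ-vector space with basis `{v t : t ∈ ℤ}` (finitely supported functions ℤ → ℂ). -/
abbrev V : Type := ℤ →₀ ℂ

/-- The basis vector `v t`. -/
noncomputable def v (t : ℤ) : V := Finsupp.single t 1

/-- The linear operator on `V` determined by its values on the basis vectors. -/
noncomputable def op (f : ℤ → V) : V →ₗ[ℂ] V := Finsupp.lift V ℂ ℤ f

/-- The operator `𝕃 n` of the module `A(α,β,F)`: `𝕃 n (v t) = (α+t+βn) v (n+t)`. -/
noncomputable def Lop (α β : ℂ) (n : ℤ) : V →ₗ[ℂ] V :=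
  op fun t => (α + t + β * n) • v (n + t)

/-- The operator `𝕀 n` of the module `A(α,β,F)`: `𝕀 n (v t) = F • v (n+t)`. -/
noncomputable def Iop (F : ℂ) (n : ℤ) : V →ₗ[ℂ] V :=
  op fun t => F • v (n + t)

/-!
Read coefficientwise, the `𝕀`-relation says `φ (v (n + t)) (p + k n) = aⁿ b · φ (v t) p`; at `n = 0`
this forces `b = 1`, and then the `𝕀`-relation moves every nonzero coefficient of `φ (v t)` to one
of `φ (v (n + t))`. Feeding this into the `𝕃`-relation and cancelling the common nonzero coefficient
leaves the scalar identity `k (α + t) = α + s + k (c n + d) F` for every `n` and every `s` in the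
support of `φ (v t)`. Its dependence on `n` gives `c = 0`, and otherwise it pins that support to
the single point `s = k t + q`. The shift relation then gives `φ (v t) = aᵗ m · v (k t + q)` with
`m = φ (v 0) q`.
-/

lemma op_v (f : ℤ → V) (t : ℤ) : op f (v t) = f t := by
  rw [op, Finsupp.lift_apply, v, Finsupp.sum_single_index (by simp), one_smul]

lemma op_smul_v_add_apply (c : ℤ → ℂ) (m : ℤ) (w : V) (p : ℤ) :
    op (fun s => c s • v (m + s)) w p = c (p - m) * w (p - m) := by
  induction w using Finsupp.induction_linear with
  | zero => simp
  | add x y hx hy => simp [hx, hy, mul_add]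
  | single s x =>
    rw [op, Finsupp.lift_apply, Finsupp.sum_single_index (by simp)]
    simp only [Finsupp.smul_apply, v, Finsupp.single_apply, smul_eq_mul]
    by_cases h : s = p - m
    · simp [h, mul_comm]
    · simp [show m + s ≠ p by omega, h]

lemma Lop_v (α β : ℂ) (n t : ℤ) : Lop α β n (v t) = (α + t + β * n) • v (n + t) :=
  op_v _ t

lemma Iop_v (F : ℂ) (n t : ℤ) : Iop F n (v t) = F • v (n + t) :=
  op_v _ t

lemma Lop_apply_apply (α β : ℂ) (n : ℤ) (w : V) (p : ℤ) :
    Lop α β n w p = (α + (p - n) + β * n) * w (p - n) := by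
  simpa [Lop] using op_smul_v_add_apply (fun s => α + s + β * n) n w p

lemma Iop_apply_apply (F : ℂ) (n : ℤ) (w : V) (p : ℤ) :
    Iop F n w p = F * w (p - n) := by
  simpa [Iop] using op_smul_v_add_apply (fun _ => F) n w p

lemma exists_apply_v_apply_ne_zero {φ : V →ₗ[ℂ] V} (hφ : φ ≠ 0) : ∃ t s, φ (v t) s ≠ 0 := by
  by_contra! h
  refine hφ (Finsupp.basisSingleOne.ext fun t => ?_)
  ext s
  simpa [v] using h t s

section Intertwining

variable {α β F : ℂ} {k : ℤ} {a b c d : ℂ} {φ : V →ₗ[ℂ] V}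

lemma apply_v_add_apply_of_comp_Iop (hF : F ≠ 0)
    (hI : ∀ n : ℤ, φ ∘ₗ Iop F n = ((a ^ n * b) • Iop F (k * n)) ∘ₗ φ) (n t p : ℤ) :
    φ (v (n + t)) p = a ^ n * b * φ (v t) (p - k * n) := by
  have h := congr($(hI n) (v t) p)
  simp only [LinearMap.comp_apply, Iop_v, map_smul, LinearMap.smul_apply, Finsupp.smul_apply,
    smul_eq_mul, Iop_apply_apply] at h
  exact mul_left_cancel₀ hF (by linear_combination h)

lemma eq_one_of_comp_Iop (hF : F ≠ 0)
    (hI : ∀ n : ℤ, φ ∘ₗ Iop F n = ((a ^ n * b) • Iop F (k * n)) ∘ₗ φ)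
    {t s : ℤ} (hts : φ (v t) s ≠ 0) : b = 1 := by
  have h := apply_v_add_apply_of_comp_Iop hF hI 0 t s
  simp only [zero_add, zpow_zero, one_mul, mul_zero, sub_zero] at h
  exact mul_right_cancel₀ hts (by linear_combination h.symm)

lemma apply_v_add_apply_of_comp_Lop
    (hL : ∀ n : ℤ, φ ∘ₗ Lop α β n
        = ((1 / (k : ℂ) * a ^ n) • Lop α β (k * n)
            + (a ^ n * (c * n + d)) • Iop F (k * n)) ∘ₗ φ) (n t p : ℤ) :
    (α + t + β * n) * φ (v (n + t)) p
      = (1 / (k : ℂ) * (α + (p - k * n) + β * (k * n)) + (c * n + d) * F)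
          * a ^ n * φ (v t) (p - k * n) := by
  have h := congr($(hL n) (v t) p)
  simp only [LinearMap.comp_apply, Lop_v, map_smul, LinearMap.add_apply, LinearMap.smul_apply,
    Finsupp.add_apply, Finsupp.smul_apply, smul_eq_mul, Lop_apply_apply, Iop_apply_apply] at h
  push_cast at h
  linear_combination h

lemma weight_eq_of_apply_v_apply_ne_zero (hk : k ≠ 0) (ha : a ≠ 0)
    (hL : ∀ n : ℤ, φ ∘ₗ Lop α β n
        = ((1 / (k : ℂ) * a ^ n) • Lop α β (k * n)
            + (a ^ n * (c * n + d)) • Iop F (k * n)) ∘ₗ φ)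
    (hshift : ∀ n t p : ℤ, φ (v (n + t)) p = a ^ n * φ (v t) (p - k * n))
    {t s : ℤ} (hts : φ (v t) s ≠ 0) (n : ℤ) :
    k * (α + t) = α + s + k * (c * n + d) * F := by
  have hkC : (k : ℂ) ≠ 0 := Int.cast_ne_zero.mpr hk
  have h := apply_v_add_apply_of_comp_Lop hL n t (s + k * n)
  rw [hshift, add_sub_cancel_right] at h
  apply mul_right_cancel₀ (mul_ne_zero (zpow_ne_zero n ha) hts)
  push_cast at h
  linear_combination (k : ℂ) * h
    + (α + s + β * (k * n)) * a ^ n * φ (v t) s * mul_inv_cancel₀ hkC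

lemma apply_v_eq_of_support_subset (q : ℤ)
    (hshift : ∀ n t p : ℤ, φ (v (n + t)) p = a ^ n * φ (v t) (p - k * n))
    (hsupp : ∀ t p : ℤ, φ (v t) p ≠ 0 → p = k * t + q) (t : ℤ) :
    φ (v t) = (a ^ t * φ (v 0) q) • v (k * t + q) := by
  have hval : φ (v t) (k * t + q) = a ^ t * φ (v 0) q := by
    simpa using hshift t 0 (k * t + q)
  have hsub : (φ (v t)).support ⊆ {k * t + q} := fun p hp =>
    Finset.mem_singleton.mpr (hsupp t p (Finsupp.mem_support_iff.mp hp))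
  rw [Finsupp.support_subset_singleton.mp hsub, hval]
  simp only [v, Finsupp.smul_single_one]

end Intertwining

theorem A_abF_twist_classification (α β : ℂ) (F : ℂ) (hF : F ≠ 0)
    (k : ℤ) (hk : k ≠ 0) (a : ℂ) (ha : a ≠ 0) (b c d : ℂ)
    (φ : V →ₗ[ℂ] V) (hφ : φ ≠ 0)
    (hL : ∀ n : ℤ, φ ∘ₗ Lop α β n
        = ((1 / (k : ℂ) * a ^ n) • Lop α β (k * n)
            + (a ^ n * (c * n + d)) • Iop F (k * n)) ∘ₗ φ)
    (hI : ∀ n : ℤ, φ ∘ₗ Iop F n = ((a ^ n * b) • Iop F (k * n)) ∘ₗ φ) :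
    b = 1 ∧ c = 0 ∧
      ∃ q : ℤ, (q : ℂ) = k * α - α - k * F * d ∧
        ∃ m : ℂ, m ≠ 0 ∧ ∀ t : ℤ, φ (v t) = (a ^ t * m) • v (k * t + q) := by
  obtain ⟨t₀, s₀, hts⟩ := exists_apply_v_apply_ne_zero hφ
  obtain rfl := eq_one_of_comp_Iop hF hI hts
  have hshift : ∀ n t p : ℤ, φ (v (n + t)) p = a ^ n * φ (v t) (p - k * n) := by
    simpa using apply_v_add_apply_of_comp_Iop hF hI
  have hweight := fun {t s} (h : φ (v t) s ≠ 0) n =>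
    weight_eq_of_apply_v_apply_ne_zero hk ha hL hshift h n
  have hc : c = 0 := by
    have hcF : (k : ℂ) * F * c = 0 := by
      linear_combination hweight hts 0 - hweight hts 1
    simpa [hk, hF] using hcF
  set q : ℤ := s₀ - k * t₀ with hq
  have hsupp : ∀ t p : ℤ, φ (v t) p ≠ 0 → p = k * t + q := by
    intro t p hp
    have h : ((p : ℤ) : ℂ) = ((k * t + q : ℤ) : ℂ) := by
      push_cast [hq]
      linear_combination hweight hts 0 - hweight hp 0
    exact_mod_cast h
  have hφv := apply_v_eq_of_support_subset q hshift hsupp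
  refine ⟨rfl, hc, q, ?_, φ (v 0) q, fun hm => hts ?_, hφv⟩
  · push_cast [hq]
    linear_combination -hweight hts 0
  · rw [hφv t₀, hm, mul_zero, zero_smul, Finsupp.zero_apply]
end
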